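/- arXiv:2501.03806 — 2 statements merged into one kernel-verified Lean document; each statement's English description precedes it below -/
import Mathlib

section
/- Let G be a graph with n vertices, m edges, minimum degree δ, and α ∈ [0,1]. Then λ₁(A_α(G)) ≤ (2αm + sqrt((n-1)(-4α²m² + 2mn((n+δ)α² - 2α + 1) - n²α²(n-1)δ)))/n. -/
/-!
With `t = tr A_α = 2αm` and `s = tr A_α² = α² Z₁ + 2(1-α)² m`, Cauchy–Schwarz applied to the
`n - 1` eigenvalues other than `λ₁` gives `(n λ₁ - t)² ≤ (n - 1)(n s - t²)`. Since
`(d - δ)(n - 1 - d) ≥ 0` for every degree `d`, the first Zagreb index satisfies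
`Z₁ ≤ 2m(n - 1) - δ(n(n - 1) - 2m)`, and substituting this into `s` gives the bound.
-/

open Matrix SimpleGraph Finset

noncomputable def Aalpha {n : ℕ} (G : SimpleGraph (Fin n)) [DecidableRel G.Adj] (α : ℝ) :
    Matrix (Fin n) (Fin n) ℝ :=
  α • Matrix.diagonal (fun i => (G.degree i : ℝ)) + (1 - α) • G.adjMatrix ℝ

theorem Matrix.IsHermitian.trace_mul_self_eq_sum_eigenvalues_sq {𝕜 ι : Type*} [RCLike 𝕜]
    [Fintype ι] [DecidableEq ι] {A : Matrix ι ι 𝕜} (hA : A.IsHermitian) :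
    (A * A).trace = ∑ i, ((hA.eigenvalues i ^ 2 : ℝ) : 𝕜) := by
  conv_lhs => rw [hA.spectral_theorem, ← map_mul, Unitary.conjStarAlgAut_apply, trace_mul_cycle,
    Unitary.coe_star_mul_self, one_mul, diagonal_mul_diagonal, trace_diagonal]
  simp [sq]

theorem card_mul_sub_sum_le_sqrt {ι : Type*} [Fintype ι] (x : ι → ℝ) (i : ι) :
    Fintype.card ι * x i - ∑ j, x j ≤
      √((Fintype.card ι - 1) * (Fintype.card ι * ∑ j, x j ^ 2 - (∑ j, x j) ^ 2)) := by
  classical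
  set N : ℝ := (Fintype.card ι : ℝ)
  have hrest : (∑ j, x j - x i) ^ 2 ≤ (N - 1) * (∑ j, x j ^ 2 - x i ^ 2) := by
    have hcard : ((univ.erase i).card : ℝ) = N - 1 := by
      rw [card_erase_of_mem (mem_univ i), card_univ, Nat.cast_pred (Fintype.card_pos_iff.mpr ⟨i⟩)]
    rw [← sum_erase_eq_sub (mem_univ i), ← sum_erase_eq_sub (mem_univ i), ← hcard]
    exact sq_sum_le_card_mul_sum_sq
  have hN : 0 ≤ N := Nat.cast_nonneg _
  refine le_abs_self _ |>.trans (Real.abs_le_sqrt ?_)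
  -- `(N-1)(N Q - S²) - (N xᵢ - S)² = N ((N-1)(Q - xᵢ²) - (S - xᵢ)²)`
  nlinarith [mul_nonneg hN (sub_nonneg.mpr hrest)]

theorem SimpleGraph.sum_degree_cast_eq_two_mul_card_edgeFinset {V : Type*} [Fintype V]
    (G : SimpleGraph V) [DecidableRel G.Adj] :
    ∑ v, (G.degree v : ℝ) = 2 * #G.edgeFinset := by
  exact_mod_cast G.sum_degrees_eq_twice_card_edges

theorem SimpleGraph.sum_degree_sq_le {V : Type*} [Fintype V] (G : SimpleGraph V)
    [DecidableRel G.Adj] {δ : ℕ} (hδ : ∀ v, δ ≤ G.degree v) :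
    ∑ v, (G.degree v : ℝ) ^ 2 ≤
      2 * #G.edgeFinset * (Fintype.card V - 1) -
        δ * (Fintype.card V * (Fintype.card V - 1) - 2 * #G.edgeFinset) := by
  set N : ℝ := (Fintype.card V : ℝ) with hN
  have hvertex (v : V) :
      (G.degree v : ℝ) ^ 2 ≤ G.degree v * (N - 1) - δ * (N - 1 - G.degree v) := by
    have hlo : (δ : ℝ) ≤ G.degree v := by exact_mod_cast hδ v
    have hhi : (G.degree v : ℝ) ≤ N - 1 := by
      rw [hN, le_sub_iff_add_le]
      exact_mod_cast G.degree_lt_card_verts v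
    nlinarith [mul_nonneg (sub_nonneg.mpr hlo) (sub_nonneg.mpr hhi)]
  have hsum := G.sum_degree_cast_eq_two_mul_card_edgeFinset
  calc ∑ v, (G.degree v : ℝ) ^ 2 ≤ ∑ v, ((G.degree v : ℝ) * (N - 1) - δ * (N - 1 - G.degree v)) :=
        sum_le_sum fun v _ => hvertex v
    _ = _ := by
      simp only [sum_sub_distrib, ← sum_mul, ← mul_sum, sum_const, card_univ, nsmul_eq_mul, hsum]
      ring

theorem SimpleGraph.trace_diagonal_mul_adjMatrix {V R : Type*} [Fintype V] [DecidableEq V]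
    [NonAssocSemiring R] (G : SimpleGraph V) [DecidableRel G.Adj] (d : V → R) :
    (diagonal d * G.adjMatrix R).trace = 0 := by
  simp only [trace, diag_apply, diagonal_mul, adjMatrix_apply, G.irrefl, if_false, mul_zero,
    sum_const_zero]

theorem trace_Aalpha {n : ℕ} (G : SimpleGraph (Fin n)) [DecidableRel G.Adj] (α : ℝ) :
    (Aalpha G α).trace = 2 * α * #G.edgeFinset := by
  have hsum := G.sum_degree_cast_eq_two_mul_card_edgeFinset
  simp [Aalpha, trace_diagonal, hsum]
  ring

theorem trace_Aalpha_mul_self {n : ℕ} (G : SimpleGraph (Fin n)) [DecidableRel G.Adj] (α : ℝ) :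
    (Aalpha G α * Aalpha G α).trace =
      α ^ 2 * ∑ v, (G.degree v : ℝ) ^ 2 + (1 - α) ^ 2 * (2 * #G.edgeFinset) := by
  have hsum := G.sum_degree_cast_eq_two_mul_card_edgeFinset
  simp only [Aalpha, add_mul, mul_add, smul_mul_smul, trace_add, trace_smul,
    trace_mul_comm (G.adjMatrix ℝ), G.trace_diagonal_mul_adjMatrix, diagonal_mul_diagonal,
    trace_diagonal]
  have hAA : (G.adjMatrix ℝ * G.adjMatrix ℝ).trace = 2 * #G.edgeFinset := by
    simp only [trace, diag_apply, adjMatrix_mul_self_apply_self, hsum]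
  simp [hAA, sq]

theorem stmt15_general {n : ℕ} (hn : 0 < n) (G : SimpleGraph (Fin n)) [DecidableRel G.Adj]
    (α : ℝ)
    (m δ : ℕ) (hm : m = G.edgeFinset.card)
    (hδ : ∀ v, δ ≤ G.degree v)
    (hH : (Aalpha G α).IsHermitian) :
    (⨆ i, hH.eigenvalues i) ≤
      (2 * α * (m : ℝ) +
        Real.sqrt ((n - 1 : ℝ) *
          (-4 * α ^ 2 * (m : ℝ) ^ 2 +
            2 * (m : ℝ) * n * (((n : ℝ) + δ) * α ^ 2 - 2 * α + 1) -
            (n : ℝ) ^ 2 * α ^ 2 * ((n : ℝ) - 1) * δ))) / (n : ℝ) := by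
  subst hm
  have : Nonempty (Fin n) := ⟨⟨0, hn⟩⟩
  obtain ⟨i₀, hi₀⟩ := exists_eq_ciSup_of_finite (f := hH.eigenvalues)
  have hsum : ∑ i, hH.eigenvalues i = 2 * α * #G.edgeFinset := by
    simpa using hH.trace_eq_sum_eigenvalues.symm.trans (trace_Aalpha G α)
  have hsum_sq : ∑ i, hH.eigenvalues i ^ 2 =
      α ^ 2 * ∑ v, (G.degree v : ℝ) ^ 2 + (1 - α) ^ 2 * (2 * #G.edgeFinset) := by
    simpa using hH.trace_mul_self_eq_sum_eigenvalues_sq.symm.trans (trace_Aalpha_mul_self G α)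
  have hspread := card_mul_sub_sum_le_sqrt hH.eigenvalues i₀
  rw [Fintype.card_fin, hsum, hsum_sq] at hspread
  have hzagreb := G.sum_degree_sq_le hδ
  rw [Fintype.card_fin] at hzagreb
  have hn1 : (0 : ℝ) ≤ n - 1 := by
    rw [sub_nonneg]; exact_mod_cast hn
  have hrad := mul_le_mul_of_nonneg_left hzagreb (mul_nonneg (Nat.cast_nonneg n) (sq_nonneg α))
  rw [← hi₀, le_div_iff₀' (by exact_mod_cast hn)]
  refine le_add_of_sub_left_le (hspread.trans (Real.sqrt_le_sqrt ?_))
  exact mul_le_mul_of_nonneg_left (by linarith) hn1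

theorem stmt15 {n : ℕ} (hn : 0 < n) (G : SimpleGraph (Fin n)) [DecidableRel G.Adj]
    (α : ℝ) (hα0 : 0 ≤ α) (hα1 : α ≤ 1)
    (m δ : ℕ) (hm : m = G.edgeFinset.card)
    (hδ : ∀ v, δ ≤ G.degree v) (hδ' : ∃ v, G.degree v = δ)
    (hH : (Aalpha G α).IsHermitian) :
    (⨆ i, hH.eigenvalues i) ≤
      (2 * α * (m : ℝ) +
        Real.sqrt ((n - 1 : ℝ) *
          (-4 * α ^ 2 * (m : ℝ) ^ 2 +
            2 * (m : ℝ) * n * (((n : ℝ) + δ) * α ^ 2 - 2 * α + 1) -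
            (n : ℝ) ^ 2 * α ^ 2 * ((n : ℝ) - 1) * δ))) / (n : ℝ) :=
  stmt15_general hn G α m δ hm hδ hH
end

section
/- Let H_{n-1,Δ₂} be the connected graph on n vertices consisting of one vertex of degree n-1 joined to all other vertices, where the remaining n-1 vertices each have degree Δ₂ < n-1 (so they induce a (Δ₂-1)-regular graph). Then for α ∈ [0,1], λ₁(A_α(H_{n-1,Δ₂})) = (αn + Δ₂ - 1 + sqrt(α²n² + (Δ₂-1)² - 2α((n-2)Δ₂ + 3n - 2) + 4(n-1)))/2. -/
/-!
Splitting the vertices into the centre `c` and the rest is an equitable partition, so every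
eigenvector `(x, y)` of the `2 × 2` quotient matrix lifts to an eigenvector of `A_α` that is `x`
at `c` and `y` elsewhere. For the largest quotient root `ρ` this lift is positive when `α < 1`,
and for a symmetric matrix with nonnegative entries a positive `u` with `A u ≤ ρ u` bounds every
eigenvalue by `ρ` (test an eigenvector's absolute value against `u`). At `α = 1` the matrix is the
degree matrix and the all-ones vector gives the bound `n - 1` instead.
-/

open Matrix SimpleGraph Finset

namespace Matrix.IsHermitian

variable {ι : Type*} [Fintype ι] {A : Matrix ι ι ℝ}

lemma mulVec_dotProduct_comm (hA : A.IsHermitian) (v w : ι → ℝ) :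
    (A *ᵥ v) ⬝ᵥ w = v ⬝ᵥ (A *ᵥ w) := by
  rw [dotProduct_comm, dotProduct_mulVec, ← mulVec_transpose, dotProduct_comm,
    ← conjTranspose_eq_transpose_of_trivial, hA.eq]

variable [DecidableEq ι]

lemma exists_eigenvalues_eq (hA : A.IsHermitian) {v : ι → ℝ} {μ : ℝ} (hv : v ≠ 0)
    (h : A *ᵥ v = μ • v) : ∃ i, hA.eigenvalues i = μ := by
  have hμ : Module.End.HasEigenvalue (toLin' A) μ :=
    Module.End.hasEigenvalue_of_hasEigenvector ⟨Module.End.mem_eigenspace_iff.mpr h, hv⟩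
  simpa [spectrum_toLin', hA.spectrum_real_eq_range_eigenvalues] using hμ.mem_spectrum

lemma eigenvalues_le_of_mulVec_le (hA : A.IsHermitian) (hnonneg : ∀ i j, 0 ≤ A i j)
    {u : ι → ℝ} (hu : ∀ j, 0 < u j) {r : ℝ} (hAu : A *ᵥ u ≤ r • u) (i : ι) :
    hA.eigenvalues i ≤ r := by
  set v : ι → ℝ := ⇑(hA.eigenvectorBasis i)
  have hv : v ≠ 0 := (WithLp.ofLp_eq_zero 2).ne.2 <| hA.eigenvectorBasis.orthonormal.ne_zero i
  set w : ι → ℝ := fun j => |v j|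
  have hw : 0 ≤ w := fun j => abs_nonneg _
  -- the triangle inequality turns the eigenvector `v` into a subeigenvector `|v|`
  have hsub : hA.eigenvalues i • w ≤ A *ᵥ w := fun j => by
    calc hA.eigenvalues i * |v j| ≤ |hA.eigenvalues i * v j| := by
          rw [abs_mul]; exact mul_le_mul_of_nonneg_right (le_abs_self _) (abs_nonneg _)
      _ = |∑ k, A j k * v k| := by
          rw [← smul_eq_mul, ← Pi.smul_apply, ← hA.mulVec_eigenvectorBasis i]; rfl
      _ ≤ ∑ k, |A j k * v k| := abs_sum_le_sum_abs _ _
      _ = (A *ᵥ w) j := by simp only [abs_mul, abs_of_nonneg (hnonneg _ _)]; rfl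
  have hpos : 0 < w ⬝ᵥ u := by
    obtain ⟨j, hj⟩ := Function.ne_iff.mp hv
    exact sum_pos' (fun k _ => mul_nonneg (hw k) (hu k).le)
      ⟨j, mem_univ j, mul_pos (abs_pos.mpr hj) (hu j)⟩
  refine le_of_mul_le_mul_right ?_ hpos
  calc hA.eigenvalues i * (w ⬝ᵥ u) = (hA.eigenvalues i • w) ⬝ᵥ u := by
        rw [smul_dotProduct, smul_eq_mul]
    _ ≤ (A *ᵥ w) ⬝ᵥ u := dotProduct_le_dotProduct_of_nonneg_right hsub fun k => (hu k).le
    _ = w ⬝ᵥ (A *ᵥ u) := hA.mulVec_dotProduct_comm w u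
    _ ≤ w ⬝ᵥ (r • u) := dotProduct_le_dotProduct_of_nonneg_left hAu hw
    _ = r * (w ⬝ᵥ u) := by rw [dotProduct_smul, smul_eq_mul]

lemma iSup_eigenvalues_eq (hA : A.IsHermitian) (hnonneg : ∀ i j, 0 ≤ A i j) {u v : ι → ℝ}
    (hu : ∀ j, 0 < u j) {r : ℝ} (hAu : A *ᵥ u ≤ r • u) (hv : v ≠ 0) (hAv : A *ᵥ v = r • v) :
    ⨆ i, hA.eigenvalues i = r := by
  obtain ⟨i, hi⟩ := hA.exists_eigenvalues_eq hv hAv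
  have : Nonempty ι := ⟨i⟩
  exact le_antisymm (ciSup_le (hA.eigenvalues_le_of_mulVec_le hnonneg hu hAu))
    (hi ▸ le_ciSup (Set.finite_range _).bddAbove i)

end Matrix.IsHermitian

/-- The largest root of the characteristic polynomial of the quotient matrix
`[[α (N - 1), (1 - α) (N - 1)], [1 - α, α + d - 1]]`. -/
noncomputable def quotientRoot (α N d : ℝ) : ℝ :=
  (α * N + d - 1 +
    Real.sqrt (α ^ 2 * N ^ 2 + (d - 1) ^ 2 - 2 * α * ((N - 2) * d + 3 * N - 2) + 4 * (N - 1))) / 2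

lemma quotientRoot_discriminant (α N d : ℝ) :
    α ^ 2 * N ^ 2 + (d - 1) ^ 2 - 2 * α * ((N - 2) * d + 3 * N - 2) + 4 * (N - 1) =
      (α * (N - 2) - (d - 1)) ^ 2 + 4 * (N - 1) * (1 - α) ^ 2 := by
  ring

lemma quotientRoot_charpoly {N : ℝ} (hN : 1 ≤ N) (α d : ℝ) :
    (quotientRoot α N d - α * (N - 1)) * (quotientRoot α N d - (α + d - 1)) =
      (N - 1) * (1 - α) ^ 2 := by
  have hE : 0 ≤ α ^ 2 * N ^ 2 + (d - 1) ^ 2 - 2 * α * ((N - 2) * d + 3 * N - 2) + 4 * (N - 1) := by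
    have : 0 ≤ N - 1 := by linarith
    rw [quotientRoot_discriminant]; positivity
  unfold quotientRoot
  linear_combination Real.sq_sqrt hE / 4

lemma quotientRoot_sub_pos {N d : ℝ} (hN : 1 < N) (hd : d + 2 ≤ N) (α : ℝ) :
    0 < quotientRoot α N d - (α + d - 1) := by
  have hs : -(α * (N - 2) - (d - 1)) <
      Real.sqrt ((α * (N - 2) - (d - 1)) ^ 2 + 4 * (N - 1) * (1 - α) ^ 2) := by
    rcases eq_or_ne α 1 with rfl | hα
    · exact (by linarith : -(1 * (N - 2) - (d - 1)) < 0).trans_le (Real.sqrt_nonneg _)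
    · have : 0 < (1 - α) ^ 2 := by have := sub_ne_zero.mpr hα.symm; positivity
      have : 0 < N - 1 := by linarith
      refine (neg_le_abs _).trans_lt ((Real.lt_sqrt (abs_nonneg _)).mpr ?_)
      rw [sq_abs]; nlinarith
  unfold quotientRoot
  rw [quotientRoot_discriminant]
  linarith

lemma quotientRoot_one {N d : ℝ} (hd : d ≤ N - 1) : quotientRoot 1 N d = N - 1 := by
  unfold quotientRoot
  rw [quotientRoot_discriminant, show (1 * (N - 2) - (d - 1)) ^ 2 + 4 * (N - 1) * (1 - 1) ^ 2 =
    (N - 1 - d) ^ 2 by ring, Real.sqrt_sq (by linarith)]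
  ring

section Aalpha

variable {n : ℕ} (G : SimpleGraph (Fin n)) [DecidableRel G.Adj]

lemma Aalpha_nonneg {α : ℝ} (hα0 : 0 ≤ α) (hα1 : α ≤ 1) (i j : Fin n) : 0 ≤ Aalpha G α i j := by
  have : 0 ≤ 1 - α := by linarith
  simp only [Aalpha, Matrix.add_apply, Matrix.smul_apply, diagonal_apply, adjMatrix_apply,
    smul_eq_mul]
  split_ifs <;> positivity

lemma Aalpha_mulVec_apply (α : ℝ) (v : Fin n → ℝ) (j : Fin n) :
    (Aalpha G α *ᵥ v) j = α * G.degree j * v j + (1 - α) * ∑ k ∈ G.neighborFinset j, v k := by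
  simp [Aalpha, add_mulVec, smul_mulVec, mulVec_diagonal, adjMatrix_mulVec_apply, mul_assoc]

lemma Aalpha_one_mulVec_one_le : Aalpha G 1 *ᵥ 1 ≤ ((n : ℝ) - 1) • 1 := fun j => by
  have : G.degree j + 1 ≤ n := by simpa using G.degree_lt_card_verts j
  have : (G.degree j : ℝ) + 1 ≤ n := by exact_mod_cast this
  simp only [Aalpha_mulVec_apply, Pi.one_apply, Pi.smul_apply, smul_eq_mul]
  linarith

variable {G} {c : Fin n}

lemma sum_neighborFinset_ite (hc : ∀ w ≠ c, G.Adj c w) (x y : ℝ) (j : Fin n) :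
    ∑ k ∈ G.neighborFinset j, (if k = c then x else y) =
      G.degree j * y + if j = c then 0 else x - y := by
  have hmem : c ∈ G.neighborFinset j ↔ j ≠ c :=
    mem_neighborFinset .. |>.trans ⟨G.ne_of_adj, fun h => (hc j h).symm⟩
  have hsplit : ∀ k, (if k = c then x else y) = y + if k = c then x - y else 0 := fun k => by
    split_ifs <;> ring
  simp_rw [hsplit, sum_add_distrib, sum_ite_eq', hmem, sum_const, nsmul_eq_mul,
    card_neighborFinset_eq_degree]
  by_cases j = c <;> simp [*]

lemma degree_eq_card_sub_one_of_forall_adj (hc : ∀ w ≠ c, G.Adj c w) : (G.degree c : ℝ) = n - 1 := by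
  have hN : G.neighborFinset c = univ.erase c := by
    ext w; simpa using ⟨fun h => (G.ne_of_adj h).symm, hc w⟩
  have : G.degree c + 1 = n := by
    rw [← card_neighborFinset_eq_degree, hN, card_erase_add_one (mem_univ c), card_univ,
      Fintype.card_fin]
  linarith [(by exact_mod_cast this : (G.degree c : ℝ) + 1 = n)]

lemma Aalpha_mulVec_ite_eq_smul (hc : ∀ w ≠ c, G.Adj c w) {Δ₂ : ℕ}
    (hdeg : ∀ w ≠ c, G.degree w = Δ₂) {α ρ x y : ℝ}
    (hcenter : α * (n - 1) * x + (1 - α) * (n - 1) * y = ρ * x)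
    (hrest : (1 - α) * x + (α + Δ₂ - 1) * y = ρ * y) :
    Aalpha G α *ᵥ (fun k => if k = c then x else y) = ρ • fun k => if k = c then x else y := by
  funext j
  rw [Aalpha_mulVec_apply, sum_neighborFinset_ite hc]
  rcases eq_or_ne j c with rfl | hj
  · simp only [degree_eq_card_sub_one_of_forall_adj hc, if_true, Pi.smul_apply, smul_eq_mul]
    linear_combination hcenter
  · simp only [hdeg j hj, hj, if_false, Pi.smul_apply, smul_eq_mul]
    linear_combination hrest

end Aalpha

theorem stmt16_general {n : ℕ} (G : SimpleGraph (Fin n)) [DecidableRel G.Adj]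
    (α : ℝ) (hα0 : 0 ≤ α) (hα1 : α ≤ 1)
    (Δ₂ : ℕ) (hΔ₂n : Δ₂ < n - 1)
    (c : Fin n) (hc : ∀ w ≠ c, G.Adj c w) (hdeg : ∀ w ≠ c, G.degree w = Δ₂)
    (hH : (Aalpha G α).IsHermitian) :
    (⨆ i, hH.eigenvalues i) =
      (α * (n : ℝ) + (Δ₂ : ℝ) - 1 +
        Real.sqrt (α ^ 2 * (n : ℝ) ^ 2 + ((Δ₂ : ℝ) - 1) ^ 2 -
          2 * α * (((n : ℝ) - 2) * (Δ₂ : ℝ) + 3 * (n : ℝ) - 2) + 4 * ((n : ℝ) - 1))) / 2 := by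
  change _ = quotientRoot α n Δ₂
  have hd : (Δ₂ : ℝ) + 2 ≤ n := by exact_mod_cast (by omega : Δ₂ + 2 ≤ n)
  have hn1 : (1 : ℝ) < n := by linarith [(Nat.cast_nonneg Δ₂ : (0 : ℝ) ≤ Δ₂)]
  set ρ := quotientRoot α n Δ₂
  set v : Fin n → ℝ := fun k => if k = c then ρ - (α + Δ₂ - 1) else 1 - α
  have hx : 0 < ρ - (α + Δ₂ - 1) := quotientRoot_sub_pos hn1 hd α
  have hv : v ≠ 0 := fun h => hx.ne' (by simpa [v] using congrFun h c)
  have hAv : Aalpha G α *ᵥ v = ρ • v := Aalpha_mulVec_ite_eq_smul hc hdeg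
    (by linear_combination -quotientRoot_charpoly hn1.le α Δ₂) (by ring)
  have hnonneg := Aalpha_nonneg G hα0 hα1
  rcases hα1.lt_or_eq with hα | rfl
  · have hu : ∀ k, 0 < v k := fun k => by
      by_cases hk : k = c <;> simp [v, hk, hx, hα]
    exact hH.iSup_eigenvalues_eq hnonneg hu hAv.le hv hAv
  · have hρ : ρ = n - 1 := quotientRoot_one (by linarith)
    rw [hρ] at hAv ⊢
    exact hH.iSup_eigenvalues_eq hnonneg (fun _ => one_pos) (Aalpha_one_mulVec_one_le G) hv hAv

theorem stmt16 {n : ℕ} (hn : 2 ≤ n) (G : SimpleGraph (Fin n)) [DecidableRel G.Adj]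
    (α : ℝ) (hα0 : 0 ≤ α) (hα1 : α ≤ 1)
    (Δ₂ : ℕ) (hΔ₂n : Δ₂ < n - 1)
    (c : Fin n) (hc : ∀ w ≠ c, G.Adj c w) (hdeg : ∀ w ≠ c, G.degree w = Δ₂)
    (hH : (Aalpha G α).IsHermitian) :
    (⨆ i, hH.eigenvalues i) =
      (α * (n : ℝ) + (Δ₂ : ℝ) - 1 +
        Real.sqrt (α ^ 2 * (n : ℝ) ^ 2 + ((Δ₂ : ℝ) - 1) ^ 2 -
          2 * α * (((n : ℝ) - 2) * (Δ₂ : ℝ) + 3 * (n : ℝ) - 2) + 4 * ((n : ℝ) - 1))) / 2 :=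
  stmt16_general G α hα0 hα1 Δ₂ hΔ₂n c hc hdeg hH
end
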